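/- Let I be a bounded interval with Lebesgue measure and let g : I → ℝ be measurable and bounded with g(x) > 0 a.e. Then for 1 < r < ∞, the closure in L^r(I) of the span of the functions {x ↦ g(x)^n : n ∈ ℕ} (including n = 0, the constant 1) equals the subspace of L^r(I) of functions having a σ(g)-measurable representative. -/

import Mathlib

/-!
By Doob–Dynkin, the `σ(g)`-measurable functions are exactly the `F ∘ g` with `F` Borel.
An `L^p` limit of polynomials in `g` is an a.e. limit of a subsequence, hence `σ(g)`-measurable
up to a null set. Conversely, if `F ∘ g ∈ L^p(μ)` then `F ∈ L^p(g₊μ)`, so `F` is `L^p(g₊μ)`-close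
to a continuous `h`; as `g` takes values in `[-M, M]` and `μ` is finite, a Weierstrass polynomial
uniformly close to `h` on `[-M, M]` is then `L^p(μ)`-close to `F` after composing with `g`.
-/

open MeasureTheory Set Filter TopologicalSpace
open scoped ENNReal Topology Polynomial

theorem mem_span_monomials_iff {α : Type*} (g : α → ℝ) {h : α → ℝ} :
    h ∈ Submodule.span ℝ {h | ∃ n : ℕ, h = fun x => g x ^ n} ↔
      ∃ q : ℝ[X], h = fun x => q.eval (g x) := by
  have hS : {h : α → ℝ | ∃ n : ℕ, h = fun x => g x ^ n} = Submonoid.closure {g} := by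
    rw [← Submonoid.powers_eq_closure, Submonoid.coe_powers]
    ext h; simp only [mem_ofPred_eq, mem_range, eq_comm (a := h)]; rfl
  rw [hS, ← Algebra.adjoin_eq_span, Subalgebra.mem_toSubmodule,
    Algebra.adjoin_singleton_eq_range_aeval]
  simp only [AlgHom.mem_range, Polynomial.aeval_pi_apply, eq_comm (a := h)]
  rfl

theorem aestronglyMeasurable_of_stronglyMeasurable_tendsto_ae {α E : Type*} [TopologicalSpace E]
    [Nonempty E] [IsCompletelyMetrizableSpace E] {m m0 : MeasurableSpace α} {μ : Measure[m0] α}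
    {u : ℕ → α → E} {f : α → E} (hu : ∀ n, StronglyMeasurable[m] (u n))
    (h : ∀ᵐ x ∂μ, Tendsto (fun n => u n x) atTop (𝓝 (f x))) : AEStronglyMeasurable[m] f μ :=
  ⟨fun x => limUnder atTop (u · x), @StronglyMeasurable.limUnder _ _ _ m _ _ _ _ _ _ _ hu,
    by filter_upwards [h] with x hx using hx.limUnder_eq.symm⟩

theorem aestronglyMeasurable_of_tendsto_eLpNorm {α E : Type*} [NormedAddCommGroup E]
    [CompleteSpace E] {m m0 : MeasurableSpace α} {μ : Measure[m0] α} {p : ℝ≥0∞} (hm : m ≤ m0)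
    (hp : p ≠ 0) {u : ℕ → α → E} {f : α → E} (hu : ∀ n, StronglyMeasurable[m] (u n))
    (hf : AEStronglyMeasurable f μ)
    (hlim : Tendsto (fun n => eLpNorm (f - u n) p μ) atTop (𝓝 0)) :
    AEStronglyMeasurable[m] f μ := by
  have hconv : TendstoInMeasure μ u atTop f :=
    tendstoInMeasure_of_tendsto_eLpNorm hp (fun n => ((hu n).mono hm).aestronglyMeasurable) hf
      (by simpa only [eLpNorm_sub_comm] using hlim)
  obtain ⟨ns, -, hns⟩ := hconv.exists_seq_tendsto_ae
  exact aestronglyMeasurable_of_stronglyMeasurable_tendsto_ae (fun n => hu (ns n)) hns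

section
variable {α : Type*} [MeasurableSpace α] {μ : Measure α} [IsFiniteMeasure μ] {p ε : ℝ≥0∞}
  {g : α → ℝ}

theorem exists_continuous_eLpNorm_comp_sub_le (hp : p ≠ ∞) (hg : Measurable g) {F : ℝ → ℝ}
    (hF : Measurable F) (hFg : MemLp (F ∘ g) p μ) (hε : ε ≠ 0) :
    ∃ h : ℝ → ℝ, Continuous h ∧ eLpNorm (F ∘ g - h ∘ g) p μ ≤ ε := by
  have hFν : MemLp F p (μ.map g) :=
    (memLp_map_measure_iff hF.aestronglyMeasurable hg.aemeasurable).2 hFg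
  obtain ⟨h, -, hFh, hh, -⟩ := hFν.exists_hasCompactSupport_eLpNorm_sub_le hp hε
  refine ⟨h, hh, ?_⟩
  rwa [eLpNorm_map_measure (hF.sub hh.measurable).aestronglyMeasurable hg.aemeasurable] at hFh

theorem exists_polynomial_eLpNorm_comp_sub_le {M : ℝ} (hbd : ∀ x, |g x| ≤ M) {h : ℝ → ℝ}
    (hh : Continuous h) (hε : ε ≠ 0) :
    ∃ Q : ℝ[X], eLpNorm (h ∘ g - fun x => Q.eval (g x)) p μ ≤ ε := by
  set C := μ univ ^ p.toReal⁻¹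
  have hC : C ≠ ∞ := ENNReal.rpow_ne_top_of_nonneg (by positivity) (measure_ne_top μ _)
  -- a function bounded by `δ` has `eLpNorm` at most `C * δ`
  have hlim : Tendsto (fun δ : ℝ => C * ENNReal.ofReal δ) (𝓝[>] 0) (𝓝 0) := by
    simpa using ENNReal.Tendsto.const_mul (ENNReal.tendsto_ofReal
      (tendsto_nhdsWithin_of_tendsto_nhds (tendsto_id (x := 𝓝 (0 : ℝ))))) (Or.inr hC)
  obtain ⟨δ, hδε, hδ⟩ :=
    ((hlim.eventually (gt_mem_nhds hε.bot_lt)).and self_mem_nhdsWithin).exists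
  obtain ⟨Q, hQ⟩ := exists_polynomial_near_of_continuousOn (-M) M h hh.continuousOn δ hδ
  refine ⟨Q, (eLpNorm_le_of_ae_bound (ae_of_all _ fun x => ?_)).trans hδε.le⟩
  rw [Pi.sub_apply, Real.norm_eq_abs, abs_sub_comm]
  exact (hQ (g x) (abs_le.1 (hbd x))).le

theorem exists_seq_polynomial_tendsto_eLpNorm (hp1 : 1 ≤ p) (hp : p ≠ ∞) (hg : Measurable g)
    {M : ℝ} (hbd : ∀ x, |g x| ≤ M) {F : ℝ → ℝ} (hF : Measurable F) (hFg : MemLp (F ∘ g) p μ) :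
    ∃ Q : ℕ → ℝ[X],
      Tendsto (fun n => eLpNorm (F ∘ g - fun x => (Q n).eval (g x)) p μ) atTop (𝓝 0) := by
  have happrox : ∀ ε : ℝ≥0∞, ε ≠ 0 →
      ∃ Q : ℝ[X], eLpNorm (F ∘ g - fun x => Q.eval (g x)) p μ ≤ ε := by
    intro ε hε
    have hε2 : ε / 2 ≠ 0 := (ENNReal.half_pos hε).ne'
    obtain ⟨h, hh, hFh⟩ := exists_continuous_eLpNorm_comp_sub_le hp hg hF hFg hε2
    obtain ⟨Q, hhQ⟩ := exists_polynomial_eLpNorm_comp_sub_le (μ := μ) (p := p) hbd hh hε2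
    refine ⟨Q, ?_⟩
    calc eLpNorm (F ∘ g - fun x => Q.eval (g x)) p μ
        = eLpNorm ((F ∘ g - h ∘ g) + (h ∘ g - fun x => Q.eval (g x))) p μ := by
          rw [sub_add_sub_cancel]
      _ ≤ eLpNorm (F ∘ g - h ∘ g) p μ + eLpNorm (h ∘ g - fun x => Q.eval (g x)) p μ :=
          eLpNorm_add_le ((hF.comp hg).sub (hh.measurable.comp hg)).aestronglyMeasurable
            ((hh.measurable.comp hg).sub (Q.continuous.measurable.comp hg)).aestronglyMeasurable
            hp1
      _ ≤ ε / 2 + ε / 2 := add_le_add hFh hhQ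
      _ = ε := ENNReal.add_halves ε
  choose Q hQ using fun n : ℕ =>
    happrox (n : ℝ≥0∞)⁻¹ (ENNReal.inv_ne_zero.2 (ENNReal.natCast_ne_top n))
  exact ⟨Q, tendsto_of_tendsto_of_tendsto_of_le_of_le tendsto_const_nhds
    ENNReal.tendsto_inv_nat_nhds_zero (fun _ => zero_le) hQ⟩

end

theorem closure_span_monomials_eq_sigma_measurable_general
    (a b r : ℝ) (hr : 1 < r)
    (g : ℝ → ℝ) (hg : Measurable g) (M : ℝ) (hbd : ∀ x, |g x| ≤ M) :
    let μ := volume.restrict (Ioo a b)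
    let S : Set (ℝ → ℝ) := {h | ∃ n : ℕ, h = fun x => g x ^ n}
    ∀ f : ℝ → ℝ, MemLp f (ENNReal.ofReal r) μ →
      ((∃ s : ℕ → ℝ → ℝ, (∀ n, s n ∈ Submodule.span ℝ S) ∧
          Tendsto (fun n => eLpNorm (f - s n) (ENNReal.ofReal r) μ) atTop (nhds 0)) ↔
        ∃ f₀ : ℝ → ℝ,
          @Measurable ℝ ℝ (MeasurableSpace.comap g Real.measurableSpace) _ f₀ ∧
          f =ᵐ[μ] f₀) := by
  intro μ S f hf
  have hp1 : 1 ≤ ENNReal.ofReal r := ENNReal.one_le_ofReal.2 hr.le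
  constructor
  · rintro ⟨s, hs, hlim⟩
    have hsm (n : ℕ) :
        StronglyMeasurable[MeasurableSpace.comap g Real.measurableSpace] (s n) := by
      obtain ⟨q, hq⟩ := (mem_span_monomials_iff g).1 (hs n)
      exact hq ▸ (q.continuous.measurable.comp (comap_measurable g)).stronglyMeasurable
    obtain ⟨f₀, hf₀, hff₀⟩ := aestronglyMeasurable_of_tendsto_eLpNorm hg.comap_le
      (zero_lt_one.trans_le hp1).ne' hsm hf.1 hlim
    exact ⟨f₀, hf₀.measurable, hff₀⟩
  · rintro ⟨f₀, hf₀, hff₀⟩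
    obtain ⟨F, hF, rfl⟩ := hf₀.exists_eq_measurable_comp
    obtain ⟨Q, hQ⟩ := exists_seq_polynomial_tendsto_eLpNorm hp1 ENNReal.ofReal_ne_top hg hbd hF
      (hf.ae_eq hff₀)
    refine ⟨fun n x => (Q n).eval (g x), fun n => (mem_span_monomials_iff g).2 ⟨Q n, rfl⟩, ?_⟩
    simpa only [eLpNorm_congr_ae (hff₀.sub EventuallyEq.rfl)] using hQ

/-- The closure in `L^r(I)` of the span of the monomials `g(x)^n`, `n ∈ ℕ`,
of a bounded positive measurable function `g` consists exactly of those `L^r`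
functions having a `σ(g)`-measurable representative. -/
theorem closure_span_monomials_eq_sigma_measurable
    (a b r : ℝ) (hab : a < b) (hr : 1 < r)
    (g : ℝ → ℝ) (hg : Measurable g) (M : ℝ) (hbd : ∀ x, |g x| ≤ M)
    (hgpos : ∀ᵐ x ∂(volume.restrict (Ioo a b)), 0 < g x) :
    let μ := volume.restrict (Ioo a b)
    let S : Set (ℝ → ℝ) := {h | ∃ n : ℕ, h = fun x => g x ^ n}
    ∀ f : ℝ → ℝ, MemLp f (ENNReal.ofReal r) μ →
      ((∃ s : ℕ → ℝ → ℝ, (∀ n, s n ∈ Submodule.span ℝ S) ∧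
          Tendsto (fun n => eLpNorm (f - s n) (ENNReal.ofReal r) μ) atTop (nhds 0)) ↔
        ∃ f₀ : ℝ → ℝ,
          @Measurable ℝ ℝ (MeasurableSpace.comap g Real.measurableSpace) _ f₀ ∧
          f =ᵐ[μ] f₀) :=
  closure_span_monomials_eq_sigma_measurable_general a b r hr g hg M hbd
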